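/- arXiv:2411.07661 — 2 statements merged into one kernel-verified Lean document; each statement's English description precedes it below -/
import Mathlib

section
/- Let (u^n)_{n ≥ 0} (with u^{−1} = u^0) be generated by the algorithm with û^n = u^n: at each step y^n satisfies ∇H^n(y^n) − ∇F^n(u^n) + M(y^n − u^n) = 0, d^n = y^n − u^n, λ_n ≥ 0 satisfies E^n(y^n + λ_n d^n) ≤ E^n(y^n) − α λ_n ‖d^n‖² for a fixed α > 0, and u^{n+1} = y^n + λ_n d^n. Assume E(u) = H(u) + F(u) is bounded below, and assume λ_max := sup_n λ_n satisfies λ_max < √(4/(3 δt L) − 1/2) − 1. Then ∑_{n=1}^∞ ‖u^{n+1} − u^n‖² < ∞. -/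
/-!
Along the iterates, `E(uⁿ) + (1/(3δt) + L/2)‖uⁿ - uⁿ⁻¹‖²` decreases by at least
`κ‖uⁿ⁺¹ - uⁿ‖²` for some `κ > 0`, so the increments are square summable because `E` is bounded
below. Testing the optimality condition against `dⁿ = yⁿ - uⁿ`, convexity of `H`, the descent
lemma for `F` and `M ⪰ 0` give `Eⁿ(yⁿ) ≤ Eⁿ(uⁿ) - (4/(3δt) - L/2)‖dⁿ‖²`; the line search only
lowers `Eⁿ`, and `Eⁿ` differs from `E` by quadratic terms controlled by the Lipschitz bound on `f`.
Since `uⁿ⁺¹ - uⁿ = (1 + λₙ) dⁿ`, the bound on `λ_max` is exactly `(4/(3δt) - L/2) > L (1 + λ_max)²`.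
-/

open scoped RealInnerProductSpace
open Set

section Gradient

variable {X : Type*} [NormedAddCommGroup X] [InnerProductSpace ℝ X] [CompleteSpace X]
  {g₁ g₂ : X → ℝ} {g₁' g₂' x : X}

theorem HasGradientAt.add (h₁ : HasGradientAt g₁ g₁' x) (h₂ : HasGradientAt g₂ g₂' x) :
    HasGradientAt (fun v => g₁ v + g₂ v) (g₁' + g₂') x := by
  rw [hasGradientAt_iff_hasFDerivAt, map_add] at *
  exact h₁.add h₂

theorem HasGradientAt.sub (h₁ : HasGradientAt g₁ g₁' x) (h₂ : HasGradientAt g₂ g₂' x) :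
    HasGradientAt (fun v => g₁ v - g₂ v) (g₁' - g₂') x := by
  rw [hasGradientAt_iff_hasFDerivAt, map_sub] at *
  exact h₁.sub h₂

theorem HasGradientAt.const_mul (c : ℝ) (h₁ : HasGradientAt g₁ g₁' x) :
    HasGradientAt (fun v => c * g₁ v) (c • g₁') x := by
  rw [hasGradientAt_iff_hasFDerivAt, map_smul] at *
  exact h₁.const_mul c

theorem hasGradientAt_norm_sub_sq (a x : X) :
    HasGradientAt (fun v => ‖v - a‖ ^ 2) ((2 : ℝ) • (x - a)) x := by
  rw [hasGradientAt_iff_hasFDerivAt]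
  refine ((hasFDerivAt_id x).sub_const a).norm_sq.congr_fderiv ?_
  ext v
  simp

theorem hasGradientAt_inner_sub (c a x : X) : HasGradientAt (fun v => ⟪c, v - a⟫) c x := by
  rw [hasGradientAt_iff_hasFDerivAt]
  simp_rw [inner_sub_right]
  exact ((innerSL ℝ c).hasFDerivAt (x := x)).sub_const ⟪c, a⟫

theorem ConvexOn.add_inner_gradient_le {H : X → ℝ} {h' y : X} (hc : ConvexOn ℝ univ H)
    (hH : HasGradientAt H h' y) (w : X) : H y + ⟪h', w - y⟫ ≤ H w := by
  let ℓ : ℝ →ᵃ[ℝ] X := AffineMap.lineMap y w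
  have hline : ConvexOn ℝ univ (H ∘ ℓ) := hc.comp_affineMap ℓ
  have hderiv : HasDerivAt (H ∘ ℓ) ⟪h', w - y⟫ 0 := by
    rw [← AffineMap.lineMap_apply_zero y w (k := ℝ)] at hH
    simpa using hH.hasFDerivAt.comp_hasDerivAt 0 AffineMap.hasDerivAt_lineMap
  have := hline.le_slope_of_hasDerivAt (mem_univ 0) (mem_univ 1) one_pos hderiv
  simp [ℓ, slope_def_field] at this
  linarith

theorem le_add_inner_add_sq_of_lipschitz_gradient {G : X → ℝ} {g : X → X} {L : ℝ}
    (hG : ∀ x, HasGradientAt G (g x) x)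
    (hLip : ∀ x y, ‖g x - g y‖ ≤ L * ‖x - y‖) (x w : X) :
    G w ≤ G x + ⟪g x, w - x⟫ + L / 2 * ‖w - x‖ ^ 2 := by
  set d := w - x
  let ψ : ℝ → ℝ := fun t => G (x + t • d) - t * ⟪g x, d⟫ - L / 2 * ‖d‖ ^ 2 * t ^ 2
  let ψ' : ℝ → ℝ := fun t => ⟪g (x + t • d) - g x, d⟫ - L * ‖d‖ ^ 2 * t
  have hψ : ∀ t, HasDerivAt ψ (ψ' t) t := by
    intro t
    have hline : HasDerivAt (fun s : ℝ => x + s • d) d t := by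
      simpa using ((hasDerivAt_id t).smul_const d).const_add x
    have h : HasDerivAt ψ _ t := (((hG _).hasFDerivAt.comp_hasDerivAt t hline).sub
      ((hasDerivAt_id t).mul_const ⟪g x, d⟫)).sub
      ((hasDerivAt_pow 2 t).const_mul (L / 2 * ‖d‖ ^ 2))
    refine h.congr_deriv ?_
    simp [ψ', inner_sub_left]
    ring
  have hψ'_nonpos : ∀ t ∈ interior (Icc (0 : ℝ) 1), ψ' t ≤ 0 := by
    intro t ht
    rw [interior_Icc] at ht
    have hgrad : ‖g (x + t • d) - g x‖ ≤ L * (t * ‖d‖) := by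
      simpa [norm_smul, abs_of_pos ht.1] using hLip (x + t • d) x
    have := (real_inner_le_norm _ d).trans (mul_le_mul_of_nonneg_right hgrad (norm_nonneg d))
    simp only [ψ']
    linarith
  have hanti : AntitoneOn ψ (Icc 0 1) :=
    antitoneOn_of_hasDerivWithinAt_nonpos (convex_Icc 0 1)
      (fun t _ => (hψ t).continuousAt.continuousWithinAt)
      (fun t _ => (hψ t).hasDerivWithinAt) hψ'_nonpos
  have := hanti (left_mem_Icc.2 zero_le_one) (right_mem_Icc.2 zero_le_one) zero_le_one
  simp [ψ, d] at this
  linarith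

end Gradient

section Model

/-! With `a = uⁿ⁻¹` and `b = uⁿ`, these are the paper's `Hⁿ`, `Fⁿ` and `Eⁿ`. -/

variable {X : Type*} [NormedAddCommGroup X] [InnerProductSpace ℝ X]

noncomputable def modelH (H : X → ℝ) (δt : ℝ) (b v : X) : ℝ := H v + (1 / δt) * ‖v - b‖ ^ 2

noncomputable def modelF (F : X → ℝ) (f : X → X) (δt : ℝ) (a b v : X) : ℝ :=
  (1 / (3 * δt)) * ‖v - a‖ ^ 2 - F v - ⟪f b - f a, v - a⟫

noncomputable def modelE (H F : X → ℝ) (f : X → X) (δt : ℝ) (a b v : X) : ℝ :=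
  modelH H δt b v - modelF F f δt a b v

variable {H F : X → ℝ} {f : X → X} {δt L : ℝ} {a b : X}

theorem modelE_eq (v : X) : modelE H F f δt a b v = H v + F v + (1 / δt) * ‖v - b‖ ^ 2
    - (1 / (3 * δt)) * ‖v - a‖ ^ 2 + ⟪f b - f a, v - a⟫ := by
  simp only [modelE, modelH, modelF]
  ring

theorem add_sq_le_of_modelE_le (hδt : 0 ≤ δt) (hL : 0 ≤ L) (hab : ‖f b - f a‖ ≤ L * ‖b - a‖)
    {z : X} {D : ℝ} (hz : modelE H F f δt a b z ≤ modelE H F f δt a b b - D) :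
    H z + F z + (1 / (3 * δt) - L / 2) * ‖z - b‖ ^ 2 + D
      ≤ H b + F b + (1 / (3 * δt) + L / 2) * ‖b - a‖ ^ 2 := by
  rw [modelE_eq, modelE_eq, sub_self, norm_zero, ← sub_add_sub_cancel z b a] at hz
  set s := z - b
  set p := b - a
  set c := f b - f a
  have hsp : ‖s + p‖ ^ 2 ≤ 2 * ‖s‖ ^ 2 + 2 * ‖p‖ ^ 2 := by
    nlinarith [norm_add_sq_real s p, norm_sub_sq_real s p, norm_nonneg (s - p)]
  have hcs : -⟪c, s⟫ ≤ L / 2 * (‖p‖ ^ 2 + ‖s‖ ^ 2) := by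
    have := (neg_le_abs _).trans ((abs_real_inner_le_norm c s).trans
      (mul_le_mul_of_nonneg_right hab (norm_nonneg s)))
    nlinarith [mul_nonneg hL (sq_nonneg (‖p‖ - ‖s‖))]
  rw [inner_add_right] at hz
  linear_combination hz + (1 / (3 * δt)) * hsp + hcs

variable [CompleteSpace X]

theorem hasGradientAt_modelH {h' x : X} (hH : HasGradientAt H h' x) :
    HasGradientAt (modelH H δt b) (h' + (2 / δt) • (x - b)) x := by
  have h : HasGradientAt (modelH H δt b) _ x :=
    hH.add ((hasGradientAt_norm_sub_sq b x).const_mul (1 / δt))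
  convert h using 2
  rw [smul_smul]; ring_nf

theorem hasGradientAt_modelF {f' x : X} (hF : HasGradientAt F f' x) :
    HasGradientAt (modelF F f δt a b) ((2 / (3 * δt)) • (x - a) - f' - (f b - f a)) x := by
  have h : HasGradientAt (modelF F f δt a b) _ x :=
    (((hasGradientAt_norm_sub_sq a x).const_mul (1 / (3 * δt))).sub hF).sub
      (hasGradientAt_inner_sub (f b - f a) a x)
  convert h using 3
  rw [smul_smul]; ring_nf

theorem modelE_le_sub_of_gradient_eq {h' y : X} {M : X →L[ℝ] X}
    (hHconv : ConvexOn ℝ univ H) (hH : HasGradientAt H h' y)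
    (hF : ∀ x, HasGradientAt F (f x) x) (hLip : ∀ x y, ‖f x - f y‖ ≤ L * ‖x - y‖)
    (hM : ∀ v, 0 ≤ ⟪M v, v⟫)
    (hopt : gradient (modelH H δt b) y - gradient (modelF F f δt a b) b + M (y - b) = 0) :
    modelE H F f δt a b y ≤ modelE H F f δt a b b - (4 / (3 * δt) - L / 2) * ‖y - b‖ ^ 2 := by
  rw [(hasGradientAt_modelH hH).gradient, (hasGradientAt_modelF (hF b)).gradient] at hopt
  have hconv := hHconv.add_inner_gradient_le hH b
  have hdesc := le_add_inner_add_sq_of_lipschitz_gradient hF hLip b y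
  rw [modelE_eq, modelE_eq, sub_self, norm_zero, ← sub_add_sub_cancel y b a]
  rw [← neg_sub y b, inner_neg_right] at hconv
  set d := y - b
  set p := b - a
  set c := f b - f a
  have hopt_d := congrArg (⟪·, d⟫) hopt
  simp only [inner_add_left, inner_sub_left, real_inner_smul_left, inner_zero_left,
    real_inner_self_eq_norm_sq] at hopt_d
  rw [norm_add_sq_real, inner_add_right, real_inner_comm p d]
  linear_combination hconv + hdesc + hopt_d + hM d

theorem energy_add_sq_le_of_iteration {h' y z : X} {M : X →L[ℝ] X} {lam κ : ℝ}
    (hδt : 0 ≤ δt) (hL : 0 ≤ L)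
    (hHconv : ConvexOn ℝ univ H) (hH : HasGradientAt H h' y)
    (hF : ∀ x, HasGradientAt F (f x) x) (hLip : ∀ x y, ‖f x - f y‖ ≤ L * ‖x - y‖)
    (hM : ∀ v, 0 ≤ ⟪M v, v⟫)
    (hopt : gradient (modelH H δt b) y - gradient (modelF F f δt a b) b + M (y - b) = 0)
    (hls : modelE H F f δt a b z ≤ modelE H F f δt a b y) (hz : z = y + lam • (y - b))
    (hκ : (κ + L) * (1 + lam) ^ 2 ≤ 4 / (3 * δt) - L / 2) :
    H z + F z + (1 / (3 * δt) + L / 2 + κ) * ‖z - b‖ ^ 2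
      ≤ H b + F b + (1 / (3 * δt) + L / 2) * ‖b - a‖ ^ 2 := by
  have hdec := hls.trans (modelE_le_sub_of_gradient_eq hHconv hH hF hLip hM hopt)
  have hzb : ‖z - b‖ ^ 2 = (1 + lam) ^ 2 * ‖y - b‖ ^ 2 := by
    rw [hz, show y + lam • (y - b) - b = (1 + lam) • (y - b) by module, norm_smul, mul_pow,
      Real.norm_eq_abs, sq_abs]
  have := add_sq_le_of_modelE_le hδt hL (hLip b a) hdec
  rw [hzb] at this ⊢
  linear_combination this + ‖y - b‖ ^ 2 * hκ

end Model

theorem exists_step_margin {L δt lamMax : ℝ} (hL : 0 < L) (hlamMax : 0 ≤ lamMax)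
    (h : lamMax < Real.sqrt (4 / (3 * δt * L) - 1 / 2) - 1) :
    0 < δt ∧ ∃ κ > 0, ∀ lam, 0 ≤ lam → lam ≤ lamMax →
      (κ + L) * (1 + lam) ^ 2 ≤ 4 / (3 * δt) - L / 2 := by
  set c := 4 / (3 * δt) - L / 2 with hc_def
  set ρ := (1 + lamMax) ^ 2
  have hρ : 0 < ρ := by positivity
  have hρc : L * ρ < c := by
    have hsq : ρ < 4 / (3 * δt * L) - 1 / 2 := (Real.lt_sqrt (by positivity)).1 (by linarith)
    have hcL : L * (4 / (3 * δt * L) - 1 / 2) = c := by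
      rw [mul_sub, ← div_div, mul_div_cancel₀ _ hL.ne']
      ring
    rw [← hcL]
    exact mul_lt_mul_of_pos_left hsq hL
  have hc : 0 < c := (mul_pos hL hρ).trans hρc
  refine ⟨?_, c / ρ - L, sub_pos.2 ((lt_div_iff₀ hρ).2 hρc), fun lam hlam0 hlam => ?_⟩
  · have h4 : 0 < 4 / (3 * δt) := by linarith
    have := (div_pos_iff_of_pos_left (by norm_num : (0 : ℝ) < 4)).1 h4
    linarith
  · rw [sub_add_cancel]
    calc c / ρ * (1 + lam) ^ 2 ≤ c / ρ * (1 + lamMax) ^ 2 := by gcongr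
      _ = c := div_mul_cancel₀ c hρ.ne'

theorem summable_of_add_mul_le {V s : ℕ → ℝ} {κ : ℝ} (hκ : 0 < κ) (hs : ∀ n, 0 ≤ s n)
    (hV : BddBelow (range V)) (hstep : ∀ n, V (n + 1) + κ * s n ≤ V n) : Summable s := by
  obtain ⟨m, hm⟩ := hV
  have hsum : ∀ N, V N + κ * ∑ i ∈ Finset.range N, s i ≤ V 0 := by
    intro N
    induction N with
    | zero => simp
    | succ N ih => rw [Finset.sum_range_succ]; linarith [hstep N]
  refine summable_of_sum_range_le (c := (V 0 - m) / κ) hs fun N => ?_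
  rw [le_div_iff₀ hκ]
  linarith [hsum N, hm (mem_range_self N)]

/-- `u (n - 1)` with truncated subtraction encodes the convention `u⁻¹ = u⁰`. -/
theorem square_summable_un_general
    {X : Type*} [NormedAddCommGroup X] [InnerProductSpace ℝ X] [FiniteDimensional ℝ X]
    (H : X → ℝ) (h : X → X) (hH : ∀ x : X, HasGradientAt H (h x) x)
    (hHconv : ConvexOn ℝ Set.univ H)
    (F : X → ℝ) (f : X → X) (hF : ∀ x : X, HasGradientAt F (f x) x)
    (L : ℝ) (hL : 0 < L) (hLip : ∀ x y : X, ‖f x - f y‖ ≤ L * ‖x - y‖)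
    (δt : ℝ) (M : X →L[ℝ] X)
    (hMpsd : ∀ x : X, 0 ≤ ⟪M x, x⟫)
    (u y : ℕ → X) (lam : ℕ → ℝ) (α : ℝ) (hα : 0 < α)
    (Hn Fn En : ℕ → X → ℝ)
    (hHn : ∀ n : ℕ, ∀ v : X, Hn n v = H v + (1 / δt) * ‖v - u n‖ ^ 2)
    (hFn : ∀ n : ℕ, ∀ v : X, Fn n v = (1 / (3 * δt)) * ‖v - u (n - 1)‖ ^ 2 - F v
      - ⟪f (u n) - f (u (n - 1)), v - u (n - 1)⟫)
    (hEn : ∀ n : ℕ, ∀ v : X, En n v = Hn n v - Fn n v)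
    (hopt : ∀ n : ℕ, gradient (Hn n) (y n) - gradient (Fn n) (u n) + M (y n - u n) = 0)
    (hlam0 : ∀ n : ℕ, 0 ≤ lam n)
    (hls : ∀ n : ℕ, En n (y n + lam n • (y n - u n))
      ≤ En n (y n) - α * lam n * ‖y n - u n‖ ^ 2)
    (hupd : ∀ n : ℕ, u (n + 1) = y n + lam n • (y n - u n))
    (E : X → ℝ) (hE : ∀ v : X, E v = H v + F v)
    (hEbdd : BddBelow (Set.range E))
    (lamMax : ℝ) (hlamMax : ∀ n : ℕ, lam n ≤ lamMax)
    (hlamBound : lamMax < Real.sqrt (4 / (3 * δt * L) - 1 / 2) - 1) :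
    Summable (fun n : ℕ => ‖u (n + 1) - u n‖ ^ 2) := by
  have : CompleteSpace X := FiniteDimensional.complete ℝ X
  obtain ⟨hδt, κ, hκ, hmargin⟩ := exists_step_margin hL ((hlam0 0).trans (hlamMax 0)) hlamBound
  refine summable_of_add_mul_le
    (V := fun n => E (u n) + (1 / (3 * δt) + L / 2) * ‖u n - u (n - 1)‖ ^ 2) hκ
    (fun n => sq_nonneg _) ?_ fun n => ?_
  · obtain ⟨m, hm⟩ := hEbdd
    refine ⟨m, ?_⟩
    rintro _ ⟨n, rfl⟩
    have : 0 ≤ (1 / (3 * δt) + L / 2) * ‖u n - u (n - 1)‖ ^ 2 := by positivity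
    linarith [hm (mem_range_self (u n))]
  · have hHn' : Hn n = modelH H δt (u n) := funext (hHn n)
    have hFn' : Fn n = modelF F f δt (u (n - 1)) (u n) := funext (hFn n)
    have hEn' : En n = modelE H F f δt (u (n - 1)) (u n) :=
      funext fun v => by rw [hEn, hHn', hFn']; rfl
    have hls' : modelE H F f δt (u (n - 1)) (u n) (u (n + 1))
        ≤ modelE H F f δt (u (n - 1)) (u n) (y n) := by
      rw [← hEn', hupd n]
      exact (hls n).trans (sub_le_self _ (mul_nonneg (mul_nonneg hα.le (hlam0 n)) (sq_nonneg _)))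
    have := energy_add_sq_le_of_iteration hδt.le hL.le hHconv (hH (y n)) hF hLip hMpsd
      (hHn' ▸ hFn' ▸ hopt n) hls' (hupd n) (hmargin _ (hlam0 n) (hlamMax n))
    simp only [hE, Nat.add_sub_cancel]
    linarith

/-- Square summability of the iterate increments for the algorithm with
`ûⁿ = uⁿ` (note `u (n-1)` with ℕ-subtraction encodes the convention `u⁻¹ = u⁰`). -/
theorem square_summable_un
    {X : Type*} [NormedAddCommGroup X] [InnerProductSpace ℝ X] [FiniteDimensional ℝ X]
    (H : X → ℝ) (h : X → X) (hH : ∀ x : X, HasGradientAt H (h x) x)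
    (hHconv : ConvexOn ℝ Set.univ H)
    (F : X → ℝ) (f : X → X) (hF : ∀ x : X, HasGradientAt F (f x) x)
    (L : ℝ) (hL : 0 < L) (hLip : ∀ x y : X, ‖f x - f y‖ ≤ L * ‖x - y‖)
    (δt : ℝ) (hδt : 0 < δt) (hδt2 : δt < 2 / (3 * L))
    (M : X →L[ℝ] X) (hMsym : ∀ x y : X, ⟪M x, y⟫ = ⟪x, M y⟫)
    (hMpsd : ∀ x : X, 0 ≤ ⟪M x, x⟫)
    (u y : ℕ → X) (lam : ℕ → ℝ) (α : ℝ) (hα : 0 < α)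
    (Hn Fn En : ℕ → X → ℝ)
    (hHn : ∀ n : ℕ, ∀ v : X, Hn n v = H v + (1 / δt) * ‖v - u n‖ ^ 2)
    (hFn : ∀ n : ℕ, ∀ v : X, Fn n v = (1 / (3 * δt)) * ‖v - u (n - 1)‖ ^ 2 - F v
      - ⟪f (u n) - f (u (n - 1)), v - u (n - 1)⟫)
    (hEn : ∀ n : ℕ, ∀ v : X, En n v = Hn n v - Fn n v)
    (hopt : ∀ n : ℕ, gradient (Hn n) (y n) - gradient (Fn n) (u n) + M (y n - u n) = 0)
    (hlam0 : ∀ n : ℕ, 0 ≤ lam n)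
    (hls : ∀ n : ℕ, En n (y n + lam n • (y n - u n))
      ≤ En n (y n) - α * lam n * ‖y n - u n‖ ^ 2)
    (hupd : ∀ n : ℕ, u (n + 1) = y n + lam n • (y n - u n))
    (E : X → ℝ) (hE : ∀ v : X, E v = H v + F v)
    (hEbdd : BddBelow (Set.range E))
    (lamMax : ℝ) (hlamMax : ∀ n : ℕ, lam n ≤ lamMax)
    (hlamBound : lamMax < Real.sqrt (4 / (3 * δt * L) - 1 / 2) - 1) :
    Summable (fun n : ℕ => ‖u (n + 1) - u n‖ ^ 2) :=
  square_summable_un_general H h hH hHconv F f hF L hL hLip δt M hMpsd u y lam α hα Hn Fn En hHn hFn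
    hEn hopt hlam0 hls hupd E hE hEbdd lamMax hlamMax hlamBound
end

section
/- Let ũ^n = (4/3)u^n − (1/3)u^{n−1} and suppose y^n ∈ X satisfies (2/(3δt))(3y^n − 4u^n + u^{n−1}) + M(y^n − ũ^n) + h(y^n) + 2f(u^n) − f(u^{n−1}) = 0, with δt < 2/(3L), d^n = y^n − u^n ≠ 0, and ∇E^n continuous. Then for every α ∈ (0, 2/(3δt) − L) there exists λ̄ > 0 such that for all λ_n ∈ (0, λ̄], E^n(y^n + λ_n d^n) − E^n(y^n) ≤ −(5λ_n/6)‖d^n‖_M² + (λ_n/6)‖u^n − u^{n−1}‖_M² − α λ_n ‖d^n‖². -/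
open scoped RealInnerProductSpace Topology

/-!
Inserting `h(yⁿ)` from the optimality condition into the gradient of `Eⁿ` at `yⁿ` gives the slope
of `λ ↦ Eⁿ(yⁿ + λ dⁿ)` at `0` as
`⟪f(yⁿ) - f(uⁿ), dⁿ⟫ - (2/(3δt))‖dⁿ‖² - ⟪M(dⁿ - (uⁿ - uⁿ⁻¹)/3), dⁿ⟫`.
The Lipschitz bound, `2⟪M w, d⟫ ≤ ‖d‖²_M + ‖w‖²_M` and the margin in `α < 2/(3δt) - L` make this
slope strictly smaller than the coefficient of `λ` on the right-hand side, and a derivative that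
is strictly below `c` keeps the difference quotients below `c` for all small `λ > 0`.
-/

theorem HasDerivAt.exists_sub_le_mul_of_lt {φ : ℝ → ℝ} {D c x : ℝ} (hφ : HasDerivAt φ D x)
    (hc : D < c) : ∃ δ, 0 < δ ∧ ∀ t, 0 < t → t ≤ δ → φ (x + t) - φ x ≤ c * t := by
  have hslope : ∀ᶠ z in 𝓝[>] x, slope φ x z < c :=
    hφ.hasDerivWithinAt.limsup_slope_le' (lt_irrefl x) hc
  obtain ⟨u, hxu, hsub⟩ := mem_nhdsGT_iff_exists_Ioc_subset.mp hslope
  refine ⟨u - x, sub_pos.mpr hxu, fun t ht htu => ?_⟩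
  have hlt : slope φ x (x + t) < c := hsub ⟨by linarith, by linarith⟩
  rw [slope_def_field, add_sub_cancel_left, div_lt_iff₀ ht] at hlt
  exact hlt.le

section InnerProductSpace

variable {X : Type*} [NormedAddCommGroup X] [InnerProductSpace ℝ X]

theorem hasDerivAt_add_smul (x v : X) : HasDerivAt (fun t : ℝ => x + t • v) v 0 := by
  simpa using ((hasDerivAt_id (0 : ℝ)).smul_const v).const_add x

theorem HasGradientAt.hasDerivAt_comp_add_smul [CompleteSpace X] {g : X → ℝ} {g' x : X}
    (hg : HasGradientAt g g' x) (v : X) :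
    HasDerivAt (fun t : ℝ => g (x + t • v)) ⟪g', v⟫ 0 := by
  have hg₀ : HasFDerivAt g (InnerProductSpace.toDual ℝ X g') (x + (0 : ℝ) • v) := by
    simpa using hg.hasFDerivAt
  simpa [Function.comp_def] using hg₀.comp_hasDerivAt 0 (hasDerivAt_add_smul x v)

theorem hasDerivAt_norm_sub_add_smul_sq (x v a : X) :
    HasDerivAt (fun t : ℝ => ‖x + t • v - a‖ ^ 2) (2 * ⟪x - a, v⟫) 0 := by
  simpa using ((hasDerivAt_add_smul x v).sub_const a).norm_sq

theorem two_mul_inner_le_of_nonneg {M : X →L[ℝ] X} (hMsym : ∀ x y : X, ⟪M x, y⟫ = ⟪x, M y⟫)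
    (hMpsd : ∀ x : X, 0 ≤ ⟪M x, x⟫) (v w : X) :
    2 * ⟪M w, v⟫ ≤ ⟪M v, v⟫ + ⟪M w, w⟫ := by
  have hvw : ⟪M v, w⟫ = ⟪M w, v⟫ := by rw [hMsym, real_inner_comm]
  have := hMpsd (v - w)
  simp only [map_sub, inner_sub_left, inner_sub_right] at this
  linarith

theorem inner_sub_le_of_lipschitz {f : X → X} {L : ℝ} (hLip : ∀ x y : X, ‖f x - f y‖ ≤ L * ‖x - y‖)
    (x y : X) : ⟪f x - f y, x - y⟫ ≤ L * ‖x - y‖ ^ 2 :=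
  calc ⟪f x - f y, x - y⟫ ≤ ‖f x - f y‖ * ‖x - y‖ := real_inner_le_norm _ _
    _ ≤ L * ‖x - y‖ * ‖x - y‖ := mul_le_mul_of_nonneg_right (hLip x y) (norm_nonneg _)
    _ = L * ‖x - y‖ ^ 2 := by ring

theorem inner_descent_lt {f : X → X} {L : ℝ} (hLip : ∀ x y : X, ‖f x - f y‖ ≤ L * ‖x - y‖)
    {M : X →L[ℝ] X} (hMsym : ∀ x y : X, ⟪M x, y⟫ = ⟪x, M y⟫) (hMpsd : ∀ x : X, 0 ≤ ⟪M x, x⟫)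
    {κ α : ℝ} (hα : α < κ - L) {y u : X} (hd : y - u ≠ 0) (w : X) :
    ⟪f y - f u - κ • (y - u) - M ((y - u) - (1 / 3 : ℝ) • w), y - u⟫
      < -(5 / 6) * ⟪M (y - u), y - u⟫ + (1 / 6) * ⟪M w, w⟫ - α * ‖y - u‖ ^ 2 := by
  have hlip := inner_sub_le_of_lipschitz hLip y u
  have hM := two_mul_inner_le_of_nonneg hMsym hMpsd (y - u) w
  have hmargin : (L - κ) * ‖y - u‖ ^ 2 < -α * ‖y - u‖ ^ 2 :=
    mul_lt_mul_of_pos_right (by linarith) (pow_pos (norm_pos_iff.mpr hd) 2)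
  set d := y - u
  simp only [map_sub, map_smul, inner_sub_left, real_inner_smul_left,
    real_inner_self_eq_norm_sq] at hlip ⊢
  linarith

theorem hasDerivAt_energy_comp_add_smul [CompleteSpace X] {H F : X → ℝ} {h f : X → X} {x : X}
    (hH : HasGradientAt H (h x) x) (hF : HasGradientAt F (f x) x) {δt : ℝ} {un unm1 : X}
    {Hn Fn En : X → ℝ} (hHn : ∀ u : X, Hn u = H u + (1 / δt) * ‖u - un‖ ^ 2)
    (hFn : ∀ u : X, Fn u = (1 / (3 * δt)) * ‖u - unm1‖ ^ 2 - F u - ⟪f un - f unm1, u - unm1⟫)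
    (hEn : ∀ u : X, En u = Hn u - Fn u) (v : X) :
    HasDerivAt (fun t : ℝ => En (x + t • v))
      ⟪h x + (2 / δt) • (x - un) - (2 / (3 * δt)) • (x - unm1) + f x + (f un - f unm1), v⟫ 0 := by
  have hlin : HasDerivAt (fun t : ℝ => ⟪f un - f unm1, x + t • v - unm1⟫) ⟪f un - f unm1, v⟫ 0 := by
    simpa using (hasDerivAt_const (0 : ℝ) (f un - f unm1)).inner ℝ
      ((hasDerivAt_add_smul x v).sub_const unm1)
  have hsplit : (fun t : ℝ => En (x + t • v)) = fun t =>
      H (x + t • v) + (1 / δt) * ‖x + t • v - un‖ ^ 2 - ((1 / (3 * δt)) * ‖x + t • v - unm1‖ ^ 2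
        - F (x + t • v) - ⟪f un - f unm1, x + t • v - unm1⟫) :=
    funext fun t => by rw [hEn, hHn, hFn]
  rw [hsplit]
  refine (((hH.hasDerivAt_comp_add_smul v).add
    ((hasDerivAt_norm_sub_add_smul_sq x v un).const_mul (1 / δt))).sub
    ((((hasDerivAt_norm_sub_add_smul_sq x v unm1).const_mul (1 / (3 * δt))).sub
      (hF.hasDerivAt_comp_add_smul v)).sub hlin)).congr_deriv ?_
  simp only [inner_add_left, inner_sub_left, real_inner_smul_left]
  ring

end InnerProductSpace

theorem line_search_estimate_util_general
    {X : Type*} [NormedAddCommGroup X] [InnerProductSpace ℝ X] [FiniteDimensional ℝ X]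
    (H : X → ℝ) (h : X → X) (hH : ∀ x : X, HasGradientAt H (h x) x)
    (F : X → ℝ) (f : X → X) (hF : ∀ x : X, HasGradientAt F (f x) x)
    (L : ℝ) (hLip : ∀ x y : X, ‖f x - f y‖ ≤ L * ‖x - y‖)
    (δt : ℝ)
    (M : X →L[ℝ] X) (hMsym : ∀ x y : X, ⟪M x, y⟫ = ⟪x, M y⟫)
    (hMpsd : ∀ x : X, 0 ≤ ⟪M x, x⟫)
    (un unm1 : X)
    (Hn Fn En : X → ℝ)
    (hHn : ∀ u : X, Hn u = H u + (1 / δt) * ‖u - un‖ ^ 2)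
    (hFn : ∀ u : X, Fn u = (1 / (3 * δt)) * ‖u - unm1‖ ^ 2 - F u
      - ⟪f un - f unm1, u - unm1⟫)
    (hEn : ∀ u : X, En u = Hn u - Fn u)
    (util : X) (hutil : util = (4 / 3 : ℝ) • un - (1 / 3 : ℝ) • unm1)
    (yn : X)
    (hopt : (2 / (3 * δt)) • ((3 : ℝ) • yn - (4 : ℝ) • un + unm1) + M (yn - util)
      + h yn + (2 : ℝ) • f un - f unm1 = 0)
    (hd : yn - un ≠ 0) :
    ∀ α : ℝ, 0 < α → α < 2 / (3 * δt) - L →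
      ∃ lamBar : ℝ, 0 < lamBar ∧ ∀ lam : ℝ, 0 < lam → lam ≤ lamBar →
        En (yn + lam • (yn - un)) - En yn
          ≤ -(5 * lam / 6) * ⟪M (yn - un), yn - un⟫
            + (lam / 6) * ⟪M (un - unm1), un - unm1⟫ - α * lam * ‖yn - un‖ ^ 2 := by
  intro α _ hα
  have hgrad : h yn + (2 / δt) • (yn - un) - (2 / (3 * δt)) • (yn - unm1) + f yn + (f un - f unm1)
      = f yn - f un - (2 / (3 * δt)) • (yn - un) - M ((yn - un) - (1 / 3 : ℝ) • (un - unm1)) := by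
    rw [hutil] at hopt
    simp only [map_sub, map_smul] at hopt ⊢
    linear_combination (norm := module) hopt
  have hderiv := hasDerivAt_energy_comp_add_smul (hH yn) (hF yn) hHn hFn hEn (yn - un)
  rw [hgrad] at hderiv
  obtain ⟨lamBar, hlamBar, hdescent⟩ :=
    hderiv.exists_sub_le_mul_of_lt (inner_descent_lt hLip hMsym hMpsd hα hd (un - unm1))
  refine ⟨lamBar, hlamBar, fun lam hlam hle => ?_⟩
  have hstep := hdescent lam hlam hle
  simp only [zero_add, zero_smul, add_zero] at hstep
  linarith

/-- Line-search estimate in the extrapolated case `ûⁿ = ũⁿ`. -/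
theorem line_search_estimate_util
    {X : Type*} [NormedAddCommGroup X] [InnerProductSpace ℝ X] [FiniteDimensional ℝ X]
    (H : X → ℝ) (h : X → X) (hH : ∀ x : X, HasGradientAt H (h x) x)
    (hHconv : ConvexOn ℝ Set.univ H)
    (F : X → ℝ) (f : X → X) (hF : ∀ x : X, HasGradientAt F (f x) x)
    (L : ℝ) (hL : 0 < L) (hLip : ∀ x y : X, ‖f x - f y‖ ≤ L * ‖x - y‖)
    (δt : ℝ) (hδt : 0 < δt) (hδt2 : δt < 2 / (3 * L))
    (M : X →L[ℝ] X) (hMsym : ∀ x y : X, ⟪M x, y⟫ = ⟪x, M y⟫)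
    (hMpsd : ∀ x : X, 0 ≤ ⟪M x, x⟫)
    (un unm1 : X)
    (Hn Fn En : X → ℝ)
    (hHn : ∀ u : X, Hn u = H u + (1 / δt) * ‖u - un‖ ^ 2)
    (hFn : ∀ u : X, Fn u = (1 / (3 * δt)) * ‖u - unm1‖ ^ 2 - F u
      - ⟪f un - f unm1, u - unm1⟫)
    (hEn : ∀ u : X, En u = Hn u - Fn u)
    (util : X) (hutil : util = (4 / 3 : ℝ) • un - (1 / 3 : ℝ) • unm1)
    (yn : X)
    (hopt : (2 / (3 * δt)) • ((3 : ℝ) • yn - (4 : ℝ) • un + unm1) + M (yn - util)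
      + h yn + (2 : ℝ) • f un - f unm1 = 0)
    (hd : yn - un ≠ 0) (hEcont : Continuous (gradient En)) :
    ∀ α : ℝ, 0 < α → α < 2 / (3 * δt) - L →
      ∃ lamBar : ℝ, 0 < lamBar ∧ ∀ lam : ℝ, 0 < lam → lam ≤ lamBar →
        En (yn + lam • (yn - un)) - En yn
          ≤ -(5 * lam / 6) * ⟪M (yn - un), yn - un⟫
            + (lam / 6) * ⟪M (un - unm1), un - unm1⟫ - α * lam * ‖yn - un‖ ^ 2 :=
  line_search_estimate_util_general H h hH F f hF L hLip δt M hMsym hMpsd un unm1 Hn Fn En hHn hFn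
    hEn util hutil yn hopt hd
end
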